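/- Let ε < p ≤ 1 and let μ be a feasible prior, and set β = μ((ε, p]). Then there exist points x1 ∈ [p_l, ε], x2 ∈ [ε, p] and x3 ∈ [p, 1] such that ∫_{[p_l,ε]} f dμ = θ·f(x1), ∫_{(ε,p]} f dμ = β·f(x2), and ∫_{(p,1]} f dμ = (1−θ−β)·f(x3); consequently P(μ,p) = (θ·f(x1) + β·f(x2)) / (θ·f(x1) + β·f(x2) + (1−θ−β)·f(x3)). (Every feasible prior has an equivalent three-point prior.) -/

import Mathlib

open MeasureTheory Set

/-- The Bernoulli likelihood of observing `k` failures in `n` trials. -/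
noncomputable def likelihood (k n : ℕ) (x : ℝ) : ℝ := x ^ k * (1 - x) ^ (n - k)

/-- A prior (probability measure on `[0,1]`) is feasible if it assigns mass `θ`
to `[0, ε]` and full mass to `[p_l, 1]`. -/
def Feasible (pl ε θ : ℝ) (μ : Measure ℝ) : Prop :=
  IsProbabilityMeasure μ ∧ μ (Icc 0 ε) = ENNReal.ofReal θ ∧ μ (Icc pl 1) = 1

/-- The posterior confidence `P(μ, p)` in the bound `p` after observing
`k` failures in `n` miles, with prior `μ`. -/
noncomputable def posterior (k n : ℕ) (μ : Measure ℝ) (p : ℝ) : ℝ :=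
  (∫ x in Icc (0 : ℝ) p, likelihood k n x ∂μ) /
    (∫ x in Icc (0 : ℝ) 1, likelihood k n x ∂μ)

/-! The likelihood is continuous, so by the first mean value theorem its integral over each of
the three pieces `[p_l, ε]`, `(ε, p]`, `(p, 1]` is the mass of the piece times a value of the
likelihood at some point of the corresponding closed interval. Feasibility makes `μ` vanish
outside `[p_l, 1]`, so the first piece carries mass `θ` and the same integral as `[0, ε]`, and
the three masses add up to `1`. -/

theorem exists_setIntegral_eq_measureReal_mul {α : Type*} [TopologicalSpace α]
    [MeasurableSpace α] {μ : Measure α} {f : α → ℝ} {s K : Set α}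
    (hs : IsPreconnected s) (hsK : s ⊆ K) (hK : K.Nonempty) (hf : ContinuousOn f s)
    (hint : IntegrableOn f s μ) (hμs : μ s ≠ ⊤) :
    ∃ c ∈ K, ∫ x in s, f x ∂μ = μ.real s * f c := by
  by_cases hμ0 : μ s = 0
  · obtain ⟨c, hc⟩ := hK
    exact ⟨c, hc, by simp [setIntegral_measure_zero f hμ0, measureReal_def, hμ0]⟩
  have hs_conn : IsConnected s := ⟨nonempty_of_measure_ne_zero hμ0, hs⟩
  obtain ⟨c, hc, hfc⟩ := exists_eq_setAverage hs_conn hf hint hμs hμ0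
  have hreal : μ.real s ≠ 0 := ENNReal.toReal_ne_zero.2 ⟨hμ0, hμs⟩
  refine ⟨c, hsK hc, ?_⟩
  rw [hfc, setAverage_eq, smul_eq_mul, mul_inv_cancel_left₀ hreal]

theorem Set.disjoint_Icc_Ioc {α : Type*} [Preorder α] (a b c : α) :
    Disjoint (Icc a b) (Ioc b c) :=
  (Iic_disjoint_Ioc le_rfl).mono_left Icc_subset_Iic_self

section IntervalSplit

variable {μ : Measure ℝ} {a b c : ℝ}

theorem setIntegral_Icc_eq_add_Ioc {E : Type*} [NormedAddCommGroup E] [NormedSpace ℝ E]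
    {f : ℝ → E} (hab : a ≤ b) (hbc : b ≤ c) (hf : IntegrableOn f (Icc a c) μ) :
    ∫ x in Icc a c, f x ∂μ = ∫ x in Icc a b, f x ∂μ + ∫ x in Ioc b c, f x ∂μ := by
  rw [← setIntegral_union (disjoint_Icc_Ioc a b c) measurableSet_Ioc
    (hf.mono_set (Icc_subset_Icc_right hbc))
    (hf.mono_set (Ioc_subset_Icc_self.trans (Icc_subset_Icc_left hab))),
    Icc_union_Ioc_eq_Icc hab hbc]

theorem measureReal_Icc_eq_add_Ioc [IsLocallyFiniteMeasure μ] (hab : a ≤ b) (hbc : b ≤ c) :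
    μ.real (Icc a c) = μ.real (Icc a b) + μ.real (Ioc b c) := by
  rw [← measureReal_union (disjoint_Icc_Ioc a b c) measurableSet_Ioc measure_Icc_lt_top.ne
    measure_Ioc_lt_top.ne, Icc_union_Ioc_eq_Icc hab hbc]

end IntervalSplit

theorem continuous_likelihood (k n : ℕ) : Continuous (likelihood k n) := by
  unfold likelihood
  fun_prop

namespace Feasible

variable {pl ε θ : ℝ} {μ : Measure ℝ}

theorem ae_mem_Icc (h : Feasible pl ε θ μ) : ∀ᵐ x ∂μ, x ∈ Icc pl 1 := by
  have := h.1
  rw [ae_iff, ← compl_def, measure_compl measurableSet_Icc (measure_ne_top μ _), h.2.2,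
    measure_univ, tsub_self]

theorem restrict_Icc_zero_eq (h : Feasible pl ε θ μ) (hpl : 0 ≤ pl) (hε : ε ≤ 1) :
    μ.restrict (Icc 0 ε) = μ.restrict (Icc pl ε) := by
  conv_lhs => rw [← Measure.restrict_eq_self_of_ae_mem h.ae_mem_Icc]
  rw [Measure.restrict_restrict measurableSet_Icc, Icc_inter_Icc, max_eq_right hpl,
    min_eq_left hε]

theorem measureReal_Icc (h : Feasible pl ε θ μ) (hpl : 0 ≤ pl) (hε : ε ≤ 1) (hθ : 0 ≤ θ) :
    μ.real (Icc pl ε) = θ := by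
  rw [← measureReal_restrict_apply_univ, ← h.restrict_Icc_zero_eq hpl hε,
    measureReal_restrict_apply_univ, measureReal_def, h.2.1, ENNReal.toReal_ofReal hθ]

theorem measureReal_Icc_zero_one (h : Feasible pl ε θ μ) (hpl : 0 ≤ pl) :
    μ.real (Icc 0 1) = 1 := by
  have := h.1
  have hμ : μ (Icc 0 1) = 1 :=
    le_antisymm prob_le_one (h.2.2 ▸ measure_mono (Icc_subset_Icc_left hpl))
  rw [measureReal_def, hμ, ENNReal.toReal_one]

end Feasible

theorem stmt_8_general (k n : ℕ) (pl ε θ p : ℝ)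
    (hpl : 0 < pl) (hple : pl < ε) (hε1 : ε < 1)
    (hθ0 : 0 < θ) (hεp : ε < p) (hp1 : p ≤ 1)
    (μ : Measure ℝ) (hμ : Feasible pl ε θ μ)
    (β : ℝ) (hβ : β = (μ (Ioc ε p)).toReal) :
    ∃ x1 ∈ Icc pl ε, ∃ x2 ∈ Icc ε p, ∃ x3 ∈ Icc p 1,
      (∫ x in Icc pl ε, likelihood k n x ∂μ) = θ * likelihood k n x1 ∧
      (∫ x in Ioc ε p, likelihood k n x ∂μ) = β * likelihood k n x2 ∧
      (∫ x in Ioc p 1, likelihood k n x ∂μ) = (1 - θ - β) * likelihood k n x3 ∧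
      posterior k n μ p =
        (θ * likelihood k n x1 + β * likelihood k n x2) /
          (θ * likelihood k n x1 + β * likelihood k n x2 +
            (1 - θ - β) * likelihood k n x3) := by
  have := hμ.1
  have hf := continuous_likelihood k n
  have hε0 : 0 ≤ ε := hpl.le.trans hple.le
  have hmass₁ : μ.real (Icc pl ε) = θ := hμ.measureReal_Icc hpl.le hε1.le hθ0.le
  have hmass₂ : μ.real (Ioc ε p) = β := hβ.symm
  have hmass₃ : μ.real (Ioc p 1) = 1 - θ - β := by
    have hθ : μ.real (Icc 0 ε) = θ := by
      rw [measureReal_def, hμ.2.1, ENNReal.toReal_ofReal hθ0.le]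
    have := hμ.measureReal_Icc_zero_one hpl.le
    rw [measureReal_Icc_eq_add_Ioc (hε0.trans hεp.le) hp1,
      measureReal_Icc_eq_add_Ioc hε0 hεp.le] at this
    linarith
  obtain ⟨x1, hx1, h1⟩ := exists_setIntegral_eq_measureReal_mul isPreconnected_Icc subset_rfl
    (nonempty_Icc.2 hple.le) hf.continuousOn hf.integrableOn_Icc (measure_ne_top μ _)
  obtain ⟨x2, hx2, h2⟩ := exists_setIntegral_eq_measureReal_mul isPreconnected_Ioc
    Ioc_subset_Icc_self (nonempty_Icc.2 hεp.le) hf.continuousOn hf.integrableOn_Ioc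
    (measure_ne_top μ _)
  obtain ⟨x3, hx3, h3⟩ := exists_setIntegral_eq_measureReal_mul isPreconnected_Ioc
    Ioc_subset_Icc_self (nonempty_Icc.2 hp1) hf.continuousOn hf.integrableOn_Ioc
    (measure_ne_top μ _)
  rw [hmass₁] at h1
  rw [hmass₂] at h2
  rw [hmass₃] at h3
  refine ⟨x1, hx1, x2, hx2, x3, hx3, h1, h2, h3, ?_⟩
  rw [posterior, setIntegral_Icc_eq_add_Ioc (hε0.trans hεp.le) hp1 hf.integrableOn_Icc,
    setIntegral_Icc_eq_add_Ioc hε0 hεp.le hf.integrableOn_Icc,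
    hμ.restrict_Icc_zero_eq hpl.le hε1.le, h1, h2, h3]

theorem stmt_8 (k n : ℕ) (hkn : k ≤ n) (pl ε θ p : ℝ)
    (hpl : 0 < pl) (hple : pl < ε) (hε1 : ε < 1)
    (hθ0 : 0 < θ) (hθ1 : θ ≤ 1) (hεp : ε < p) (hp1 : p ≤ 1)
    (μ : Measure ℝ) (hμ : Feasible pl ε θ μ)
    (β : ℝ) (hβ : β = (μ (Ioc ε p)).toReal) :
    ∃ x1 ∈ Icc pl ε, ∃ x2 ∈ Icc ε p, ∃ x3 ∈ Icc p 1,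
      (∫ x in Icc pl ε, likelihood k n x ∂μ) = θ * likelihood k n x1 ∧
      (∫ x in Ioc ε p, likelihood k n x ∂μ) = β * likelihood k n x2 ∧
      (∫ x in Ioc p 1, likelihood k n x ∂μ) = (1 - θ - β) * likelihood k n x3 ∧
      posterior k n μ p =
        (θ * likelihood k n x1 + β * likelihood k n x2) /
          (θ * likelihood k n x1 + β * likelihood k n x2 +
            (1 - θ - β) * likelihood k n x3) :=
  stmt_8_general k n pl ε θ p hpl hple hε1 hθ0 hεp hp1 μ hμ β hβ
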